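/- For a fixed unit vector p, the pointwise gradient bound ‖∂ₓ f̄(x,p)‖ ≤ ‖w_x(x)‖ · v̄ / ((v̄ − ‖w(x)‖)^{5/2} (v̄ + ‖w(x)‖)^{1/2}) holds at every x. -/

import Mathlib

/-!
With `a = ⟪y, p⟫` and `s = √(v² - ‖y‖² + a²)`, rationalising gives `f̄ = 1 / (a + s)`, where
`a + s` is the ground speed in direction `p` against the wind `y`. Its derivative in `y` is
`-(a + s)⁻² s⁻¹ ((a + s) ⟪p, ·⟫ - ⟪y, ·⟫)`, of norm at most `(a + s + ‖y‖) / ((a + s)² s)`.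
Since the ground speed is at least `v - ‖y‖` and `s ≥ √(v² - ‖y‖²)`, this is at most
`v / ((v - ‖y‖)² √(v² - ‖y‖²))`. The chain rule through `w` contributes the factor `‖w_x‖`.
-/

open scoped RealInnerProductSpace Topology

lemma sub_le_add_sqrt_sq_sub_sq_add_sq {a k v : ℝ} (hak : -k ≤ a) (hkv : k ≤ v) :
    v - k ≤ a + √(v ^ 2 - k ^ 2 + a ^ 2) := by
  have hsq : (v - k - a) ^ 2 ≤ v ^ 2 - k ^ 2 + a ^ 2 := by
    nlinarith [mul_nonneg (sub_nonneg.2 hkv) (neg_le_iff_add_nonneg.1 hak)]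
  linarith [(le_abs_self (v - k - a)).trans (Real.abs_le_sqrt hsq)]

lemma add_div_sq_le_div_sub_sq {t k v : ℝ} (hk : 0 ≤ k) (hvk : 0 < v - k) (ht : v - k ≤ t) :
    (t + k) / t ^ 2 ≤ v / (v - k) ^ 2 := by
  have ht0 : 0 < t := hvk.trans_le ht
  rw [div_le_div_iff₀ (by positivity) (by positivity)]
  nlinarith [mul_nonneg hk (sub_nonneg.2 ht), mul_nonneg (mul_nonneg hk ht0.le) (sub_nonneg.2 ht),
    mul_nonneg (mul_nonneg ht0.le ht0.le) (sub_nonneg.2 ht)]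

lemma rpow_five_halves_mul_rpow_half {a b : ℝ} (ha : 0 ≤ a) (hb : 0 ≤ b) :
    a ^ ((5 : ℝ) / 2) * b ^ ((1 : ℝ) / 2) = a ^ 2 * √(a * b) := by
  rw [show (5 : ℝ) / 2 = (2 : ℕ) + 1 / 2 by norm_num, Real.rpow_add' ha (by norm_num),
    Real.rpow_natCast, Real.sqrt_eq_rpow, Real.mul_rpow ha hb, mul_assoc]

lemma sq_sub_norm_sq_pos {F : Type*} [SeminormedAddGroup F] {v : ℝ} {y : F} (hy : ‖y‖ < v) :
    0 < v ^ 2 - ‖y‖ ^ 2 :=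
  sub_pos.2 (pow_lt_pow_left₀ hy (norm_nonneg y) two_ne_zero)

variable {E : Type*} [NormedAddCommGroup E] [InnerProductSpace ℝ E]

noncomputable def slowness (v : ℝ) (p y : E) : ℝ :=
  (-⟪y, p⟫ + √(v ^ 2 - ‖y‖ ^ 2 + ⟪y, p⟫ ^ 2)) / (v ^ 2 - ‖y‖ ^ 2)

/-- The positive root `g` of `‖g • p - y‖ = v` when `‖p‖ = 1`. -/
noncomputable def groundSpeed (v : ℝ) (p y : E) : ℝ :=
  ⟪y, p⟫ + √(v ^ 2 - ‖y‖ ^ 2 + ⟪y, p⟫ ^ 2)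

lemma groundSpeed_pos {v : ℝ} {p y : E} (hy : ‖y‖ < v) : 0 < groundSpeed v p y := by
  have habs : |⟪y, p⟫| < √(v ^ 2 - ‖y‖ ^ 2 + ⟪y, p⟫ ^ 2) := by
    rw [Real.lt_sqrt (abs_nonneg _), sq_abs]
    linarith [sq_sub_norm_sq_pos hy]
  unfold groundSpeed
  linarith [neg_abs_le ⟪y, p⟫]

lemma sub_norm_le_groundSpeed {v : ℝ} {p y : E} (hp : ‖p‖ ≤ 1) (hy : ‖y‖ ≤ v) :
    v - ‖y‖ ≤ groundSpeed v p y := by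
  have hinner : |⟪y, p⟫| ≤ ‖y‖ :=
    (abs_real_inner_le_norm y p).trans (mul_le_of_le_one_right (norm_nonneg y) hp)
  exact sub_le_add_sqrt_sq_sub_sq_add_sq (neg_le_of_abs_le hinner) hy

lemma slowness_eq_inv_groundSpeed {v : ℝ} {p y : E} (hy : ‖y‖ < v) :
    slowness v p y = (groundSpeed v p y)⁻¹ := by
  have hs : √(v ^ 2 - ‖y‖ ^ 2 + ⟪y, p⟫ ^ 2) ^ 2 = v ^ 2 - ‖y‖ ^ 2 + ⟪y, p⟫ ^ 2 :=
    Real.sq_sqrt (by nlinarith [sq_sub_norm_sq_pos hy, sq_nonneg ⟪y, p⟫])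
  have hg := (groundSpeed_pos (p := p) hy).ne'
  rw [groundSpeed] at hg ⊢
  rw [slowness, div_eq_iff (sq_sub_norm_sq_pos hy).ne', inv_mul_eq_div, eq_div_iff hg]
  linear_combination hs

lemma hasFDerivAt_groundSpeed {v : ℝ} {p y : E} (hy : ‖y‖ < v) :
    HasFDerivAt (groundSpeed v p)
      ((√(v ^ 2 - ‖y‖ ^ 2 + ⟪y, p⟫ ^ 2))⁻¹ •
        (groundSpeed v p y • innerSL ℝ p - innerSL ℝ y)) y := by
  have hinner : HasFDerivAt (fun y : E => ⟪y, p⟫) (innerSL ℝ p) y := by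
    convert (innerSL ℝ p).hasFDerivAt using 1
    exact funext fun z => real_inner_comm p z
  have hdisc : HasFDerivAt (fun y : E => v ^ 2 - ‖y‖ ^ 2 + ⟪y, p⟫ ^ 2)
      (-(2 • innerSL ℝ y) + (2 * ⟪y, p⟫) • innerSL ℝ p) y := by
    simpa using ((hasFDerivAt_const (v ^ 2) y).fun_sub
      (hasStrictFDerivAt_norm_sq y).hasFDerivAt).fun_add (hinner.pow 2)
  have hpos : 0 < v ^ 2 - ‖y‖ ^ 2 + ⟪y, p⟫ ^ 2 := by
    nlinarith [sq_sub_norm_sq_pos hy, sq_nonneg ⟪y, p⟫]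
  refine (hinner.add (hdisc.sqrt hpos.ne')).congr_fderiv ?_
  ext h
  simp only [groundSpeed, add_apply, smul_apply, sub_apply, neg_apply, smul_eq_mul, nsmul_eq_mul]
  field_simp
  ring

lemma hasFDerivAt_slowness {v : ℝ} {p y : E} (hy : ‖y‖ < v) :
    HasFDerivAt (slowness v p)
      (-(groundSpeed v p y ^ 2 * √(v ^ 2 - ‖y‖ ^ 2 + ⟪y, p⟫ ^ 2))⁻¹ •
        (groundSpeed v p y • innerSL ℝ p - innerSL ℝ y)) y := by
  have hinv := (hasDerivAt_inv (groundSpeed_pos (p := p) hy).ne').comp_hasFDerivAt y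
    (hasFDerivAt_groundSpeed hy)
  have hball : ∀ᶠ z in 𝓝 y, slowness v p z = (groundSpeed v p z)⁻¹ :=
    (isOpen_lt continuous_norm continuous_const).eventually_mem hy |>.mono
      fun _ hz => slowness_eq_inv_groundSpeed hz
  refine (hinv.congr_of_eventuallyEq hball).congr_fderiv ?_
  rw [smul_smul, neg_mul, mul_inv]

lemma norm_fderiv_slowness_le {v : ℝ} {p y : E} (hp : ‖p‖ ≤ 1) (hy : ‖y‖ < v) :
    ‖fderiv ℝ (slowness v p) y‖ ≤
      v / ((v - ‖y‖) ^ ((5 : ℝ) / 2) * (v + ‖y‖) ^ ((1 : ℝ) / 2)) := by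
  have hk := norm_nonneg y
  have hg := groundSpeed_pos (p := p) hy
  set g := groundSpeed v p y
  set s := √(v ^ 2 - ‖y‖ ^ 2 + ⟪y, p⟫ ^ 2)
  have hσ : √((v - ‖y‖) * (v + ‖y‖)) ≤ s := Real.sqrt_le_sqrt (by nlinarith [sq_nonneg ⟪y, p⟫])
  have hσ0 : 0 < √((v - ‖y‖) * (v + ‖y‖)) := Real.sqrt_pos.2 (by nlinarith)
  have hdir : ‖g • innerSL ℝ p - innerSL ℝ y‖ ≤ g + ‖y‖ :=
    calc ‖g • innerSL ℝ p - innerSL ℝ y‖ ≤ ‖g • innerSL ℝ p‖ + ‖innerSL ℝ y‖ := norm_sub_le _ _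
      _ = g * ‖p‖ + ‖y‖ := by
        rw [norm_smul, innerSL_apply_norm, innerSL_apply_norm, Real.norm_of_nonneg hg.le]
      _ ≤ g + ‖y‖ := by grw [mul_le_of_le_one_right hg.le hp]
  rw [(hasFDerivAt_slowness hy).fderiv, norm_smul, norm_neg, norm_inv,
    Real.norm_of_nonneg (by positivity), rpow_five_halves_mul_rpow_half (by linarith) (by linarith)]
  calc (g ^ 2 * s)⁻¹ * ‖g • innerSL ℝ p - innerSL ℝ y‖
      ≤ (g ^ 2 * s)⁻¹ * (g + ‖y‖) := by gcongr
    _ = (g + ‖y‖) / g ^ 2 * s⁻¹ := by ring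
    _ ≤ v / (v - ‖y‖) ^ 2 * (√((v - ‖y‖) * (v + ‖y‖)))⁻¹ :=
        mul_le_mul (add_div_sq_le_div_sub_sq hk (by linarith) (sub_norm_le_groundSpeed hp hy.le))
          (inv_anti₀ hσ0 hσ) (by positivity) (div_nonneg (by linarith) (sq_nonneg _))
    _ = v / ((v - ‖y‖) ^ 2 * √((v - ‖y‖) * (v + ‖y‖))) := by rw [← div_eq_mul_inv, div_div]

theorem slowness_gradient_bound_general
    (v : ℝ)
    (w : EuclideanSpace ℝ (Fin 2) → EuclideanSpace ℝ (Fin 2))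
    (hw : ContDiff ℝ 1 w)
    (hwb : ∀ x, ‖w x‖ < v)
    (p : EuclideanSpace ℝ (Fin 2)) (hp : ‖p‖ = 1)
    (x : EuclideanSpace ℝ (Fin 2)) :
    ‖fderiv ℝ (fun z : EuclideanSpace ℝ (Fin 2) =>
        (-⟪w z, p⟫ + Real.sqrt (v ^ 2 - ‖w z‖ ^ 2 + ⟪w z, p⟫ ^ 2)) /
          (v ^ 2 - ‖w z‖ ^ 2)) x‖ ≤
      ‖fderiv ℝ w x‖ * v /
        ((v - ‖w x‖) ^ ((5 : ℝ) / 2) * (v + ‖w x‖) ^ ((1 : ℝ) / 2)) := by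
  change ‖fderiv ℝ (slowness v p ∘ w) x‖ ≤ _
  rw [fderiv_comp x (hasFDerivAt_slowness (hwb x)).differentiableAt
    ((hw.differentiable one_ne_zero).differentiableAt)]
  calc _ ≤ ‖fderiv ℝ (slowness v p) (w x)‖ * ‖fderiv ℝ w x‖ :=
        ContinuousLinearMap.opNorm_comp_le _ _
    _ ≤ v / ((v - ‖w x‖) ^ ((5 : ℝ) / 2) * (v + ‖w x‖) ^ ((1 : ℝ) / 2)) * ‖fderiv ℝ w x‖ := by
        gcongr
        exact norm_fderiv_slowness_le hp.le (hwb x)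
    _ = _ := by ring

/-- pointwise gradient bound for the slowness function:
`‖∂ₓ f̄(x,p)‖ ≤ ‖w_x(x)‖ · v̄ / ((v̄ − ‖w x‖)^{5/2} (v̄ + ‖w x‖)^{1/2})`. -/
theorem slowness_gradient_bound
    (v : ℝ) (hv : 0 < v)
    (w : EuclideanSpace ℝ (Fin 2) → EuclideanSpace ℝ (Fin 2))
    (hw : ContDiff ℝ 1 w)
    (hwb : ∀ x, ‖w x‖ < v)
    (p : EuclideanSpace ℝ (Fin 2)) (hp : ‖p‖ = 1)
    (x : EuclideanSpace ℝ (Fin 2)) :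
    ‖fderiv ℝ (fun z : EuclideanSpace ℝ (Fin 2) =>
        (-⟪w z, p⟫ + Real.sqrt (v ^ 2 - ‖w z‖ ^ 2 + ⟪w z, p⟫ ^ 2)) /
          (v ^ 2 - ‖w z‖ ^ 2)) x‖ ≤
      ‖fderiv ℝ w x‖ * v /
        ((v - ‖w x‖) ^ ((5 : ℝ) / 2) * (v + ‖w x‖) ^ ((1 : ℝ) / 2)) :=
  slowness_gradient_bound_general v w hw hwb p hp x
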